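/- Sparsified quantization bound: if S ⊆ {1,…,n} is a fixed subset of K coordinates and Q quantizes only the coordinates in S (setting others to zero) via the max-norm stochastic rounding with scale s and bound W ≥ ‖v‖₂, then E[Q(v)_i] = v_i for i ∈ S, Q(v)_i = 0 for i ∉ S, and E[‖Q(v) − v|_S‖₂²] ≤ (1 + min(K/s², √K/s))·W², where v|_S is v restricted to S. -/

import Mathlib

/-!
On each coordinate of `S` the quantizer is a two-point distribution on the grid points
`W·sign(v_i)·l_i/s` and `W·sign(v_i)·(l_i+1)/s`, whose mean is `v_i` by the choice of `p_i`
and whose variance is at most `p_i(1 - p_i)(W/s)² ≤ p_i (W/s)²`. Summing, it remains to bound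
`∑_{i ∈ S} p_i`: by `K` since `p_i ≤ 1`, and by `√K·s` since `p_i ≤ |v_i| s / W` and
`∑_{i ∈ S} |v_i| ≤ √K ‖v‖₂ ≤ √K W` by Cauchy–Schwarz.
-/

open Finset

lemma Real.sign_mul_abs (x : ℝ) : Real.sign x * |x| = x := by
  rcases lt_trichotomy x 0 with h | rfl | h
  · rw [Real.sign_of_neg h, abs_of_neg h, neg_one_mul, neg_neg]
  · rw [abs_zero, mul_zero]
  · rw [Real.sign_of_pos h, abs_of_pos h, one_mul]

lemma Real.sign_sq_le_one (x : ℝ) : Real.sign x ^ 2 ≤ 1 := by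
  rcases Real.sign_apply_eq x with h | h | h <;> rw [h] <;> norm_num

lemma two_point_variance {a b p x : ℝ} (hx : (1 - p) * a + p * b = x) :
    (1 - p) * (a - x) ^ 2 + p * (b - x) ^ 2 = p * (1 - p) * (b - a) ^ 2 := by
  subst hx
  ring

lemma sum_abs_le_sqrt_card_mul_sqrt_sum_sq {ι : Type*} [Fintype ι] (S : Finset ι) (v : ι → ℝ) :
    ∑ i ∈ S, |v i| ≤ √(#S : ℝ) * √(∑ i, v i ^ 2) :=
  calc ∑ i ∈ S, |v i| = ∑ i ∈ S, 1 * |v i| := by simp only [one_mul]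
    _ ≤ √(∑ i ∈ S, (1 : ℝ) ^ 2) * √(∑ i ∈ S, |v i| ^ 2) := Real.sum_mul_le_sqrt_mul_sqrt _ _ _
    _ ≤ √(#S : ℝ) * √(∑ i, v i ^ 2) := by
        simp only [one_pow, sum_const, nsmul_eq_mul, mul_one, sq_abs]
        gcongr √(#S : ℝ) * √?_
        exact sum_le_univ_sum_of_nonneg fun i ↦ sq_nonneg (v i)

section StochasticRounding

variable {x W s l p : ℝ}

lemma stochasticRounding_mean (hW : W ≠ 0) (hs : s ≠ 0) (hp : p = |x| / W * s - l) :
    W * Real.sign x * ((1 - p) * (l / s) + p * ((l + 1) / s)) = x := by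
  have hlevel : (1 - p) * (l / s) + p * ((l + 1) / s) = |x| / W := by
    rw [hp]; field_simp; ring
  rw [hlevel, mul_right_comm, mul_div_cancel₀ _ hW, mul_comm, Real.sign_mul_abs]

lemma stochasticRounding_prob_mem_Icc (hs : 0 < s) (hp : p = |x| / W * s - l)
    (hlo : l / s ≤ |x| / W) (hhi : |x| / W ≤ (l + 1) / s) : p ∈ Set.Icc 0 1 := by
  rw [div_le_iff₀ hs] at hlo
  rw [le_div_iff₀ hs] at hhi
  constructor <;> linarith

lemma stochasticRounding_variance_le (hp : p ∈ Set.Icc 0 1)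
    (hmean : W * Real.sign x * ((1 - p) * (l / s) + p * ((l + 1) / s)) = x) :
    (1 - p) * (W * Real.sign x * (l / s) - x) ^ 2
        + p * (W * Real.sign x * ((l + 1) / s) - x) ^ 2 ≤ p * (W / s) ^ 2 := by
  obtain ⟨hp0, hp1⟩ := hp
  rw [two_point_variance (by linear_combination hmean)]
  calc p * (1 - p) * (W * Real.sign x * ((l + 1) / s) - W * Real.sign x * (l / s)) ^ 2
      = p * (1 - p) * (Real.sign x ^ 2 * (W / s) ^ 2) := by ring
    _ ≤ p * 1 * (1 * (W / s) ^ 2) := by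
        gcongr
        · linarith
        · exact Real.sign_sq_le_one x
    _ = p * (W / s) ^ 2 := by ring

end StochasticRounding

open Finset in
theorem sparsified_qsgd_bound_general
    (n s K : ℕ) (hs : 1 ≤ s) (S : Finset (Fin n)) (hK : S.card = K)
    (v : Fin n → ℝ) (W : ℝ) (hW : 0 < W)
    (hWv : Real.sqrt (∑ i, v i ^ 2) ≤ W)
    (l : Fin n → ℕ)
    (hlo : ∀ i ∈ S, (l i : ℝ) / s ≤ |v i| / W)
    (hhi : ∀ i ∈ S, |v i| / W ≤ ((l i : ℝ) + 1) / s)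
    (p : Fin n → ℝ) (hp : ∀ i ∈ S, p i = |v i| / W * s - l i) :
    (∀ i ∈ S, W * Real.sign (v i) *
        ((1 - p i) * ((l i : ℝ) / s) + p i * (((l i : ℝ) + 1) / s)) = v i)
    ∧ ∑ i ∈ S, ((1 - p i) * (W * Real.sign (v i) * ((l i : ℝ) / s) - v i) ^ 2
          + p i * (W * Real.sign (v i) * (((l i : ℝ) + 1) / s) - v i) ^ 2)
        ≤ (1 + min ((K : ℝ) / (s : ℝ) ^ 2) (Real.sqrt K / s)) * W ^ 2 := by
  have hs' : (0 : ℝ) < s := by exact_mod_cast hs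
  have hmean i (hi : i ∈ S) := stochasticRounding_mean hW.ne' hs'.ne' (hp i hi)
  refine ⟨hmean, ?_⟩
  have hprob i (hi : i ∈ S) := stochasticRounding_prob_mem_Icc hs' (hp i hi) (hlo i hi) (hhi i hi)
  have hsum_card : ∑ i ∈ S, p i ≤ K := by
    simpa [hK] using sum_le_card_nsmul S p 1 fun i hi ↦ (hprob i hi).2
  have hsum_sqrt : ∑ i ∈ S, p i ≤ √K * s :=
    calc ∑ i ∈ S, p i ≤ ∑ i ∈ S, |v i| * (s / W) :=
          sum_le_sum fun i hi ↦ by rw [hp i hi, div_mul_eq_mul_div, mul_div_assoc']; simp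
      _ = (∑ i ∈ S, |v i|) * (s / W) := (sum_mul ..).symm
      _ ≤ (√K * W) * (s / W) := by
          gcongr
          exact hK ▸ (sum_abs_le_sqrt_card_mul_sqrt_sum_sq S v).trans (by gcongr)
      _ = √K * s := by field_simp
  calc _ ≤ ∑ i ∈ S, p i * (W / s) ^ 2 :=
        sum_le_sum fun i hi ↦ stochasticRounding_variance_le (hprob i hi) (hmean i hi)
    _ = (∑ i ∈ S, p i) * (W / s) ^ 2 := (sum_mul ..).symm
    _ ≤ min ((K : ℝ) / (s : ℝ) ^ 2) (√K / s) * W ^ 2 := by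
        rw [min_mul_of_nonneg _ _ (sq_nonneg W)]
        refine le_min ?_ ?_
        · grw [hsum_card]; exact le_of_eq (by ring)
        · grw [hsum_sqrt]; exact le_of_eq (by field_simp)
    _ ≤ (1 + min ((K : ℝ) / (s : ℝ) ^ 2) (√K / s)) * W ^ 2 := by
        gcongr
        exact le_add_of_nonneg_left zero_le_one

open Finset in
/-- Sparsified quantization bound: quantizing only the `K`
coordinates in a fixed set `S` (others set to zero) with the max-norm
stochastic rounding quantizer at scale `s` and bound `W ≥ ‖v‖₂` gives
unbiasedness on `S` and `E[‖Q(v) - v|_S‖₂²] ≤ (1 + min(K/s², √K/s))·W²`. -/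
theorem sparsified_qsgd_bound
    (n s K : ℕ) (hs : 1 ≤ s) (S : Finset (Fin n)) (hK : S.card = K)
    (v : Fin n → ℝ) (W : ℝ) (hW : 0 < W)
    (hWv : Real.sqrt (∑ i, v i ^ 2) ≤ W)
    (l : Fin n → ℕ) (hls : ∀ i ∈ S, l i < s)
    (hlo : ∀ i ∈ S, (l i : ℝ) / s ≤ |v i| / W)
    (hhi : ∀ i ∈ S, |v i| / W ≤ ((l i : ℝ) + 1) / s)
    (p : Fin n → ℝ) (hp : ∀ i ∈ S, p i = |v i| / W * s - l i) :
    (∀ i ∈ S, W * Real.sign (v i) *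
        ((1 - p i) * ((l i : ℝ) / s) + p i * (((l i : ℝ) + 1) / s)) = v i)
    ∧ ∑ i ∈ S, ((1 - p i) * (W * Real.sign (v i) * ((l i : ℝ) / s) - v i) ^ 2
          + p i * (W * Real.sign (v i) * (((l i : ℝ) + 1) / s) - v i) ^ 2)
        ≤ (1 + min ((K : ℝ) / (s : ℝ) ^ 2) (Real.sqrt K / s)) * W ^ 2 :=
  sparsified_qsgd_bound_general n s K hs S hK v W hW hWv l hlo hhi p hp
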